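/- arXiv:2505.02962 — 3 statements merged into one kernel-verified Lean document; each statement's English description precedes it below -/
import Mathlib

section
/- Let I ⊆ ℝ be an open interval, ρ : I → ℝ smooth and nowhere zero, and ζ : I → ℝ smooth with ζ'(t) = 2(ρ(t)³ − 1)/ρ(t)³ for all t ∈ I. Let w : ℝ² → ℝ be a smooth solution of the reduced equation. Then the function u(t,x,y) := w(ζ(t), y/ρ(t) − x) − (ρ'(t)/(6ρ(t)))·y³ is a smooth solution of the dispersionless Nyzhnyk equation on I × ℝ². -/
/-- First-coordinate partial derivative of a function on `ℝ²`. -/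
noncomputable def d1 (f : ℝ × ℝ → ℝ) (p : ℝ × ℝ) : ℝ := deriv (fun s => f (s, p.2)) p.1

/-- Second-coordinate partial derivative of a function on `ℝ²`. -/
noncomputable def d2 (f : ℝ × ℝ → ℝ) (p : ℝ × ℝ) : ℝ := deriv (fun s => f (p.1, s)) p.2

/-- `w` is a smooth solution of the reduced equation `∂₁∂₂²w + (∂₂²w)·(∂₂³w) = 0` on `U`. -/
def IsRedSolOn (w : ℝ × ℝ → ℝ) (U : Set (ℝ × ℝ)) : Prop :=
  ContDiffOn ℝ (⊤ : ℕ∞) w U ∧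
    ∀ p ∈ U, d1 (d2 (d2 w)) p + d2 (d2 w) p * d2 (d2 (d2 w)) p = 0

/-- `h` is a smooth solution of the inviscid Burgers equation `∂₁h + h·∂₂h = 0` on `U`. -/
def IsBurgersSolOn (h : ℝ × ℝ → ℝ) (U : Set (ℝ × ℝ)) : Prop :=
  ContDiffOn ℝ (⊤ : ℕ∞) h U ∧ ∀ p ∈ U, d1 h p + h p * d2 h p = 0

/-- Partial derivative with respect to `t` of a function on `ℝ³ = ℝ_t × ℝ_x × ℝ_y`. -/
noncomputable def Dt (f : ℝ × ℝ × ℝ → ℝ) (p : ℝ × ℝ × ℝ) : ℝ :=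
  deriv (fun s => f (s, p.2.1, p.2.2)) p.1

/-- Partial derivative with respect to `x`. -/
noncomputable def Dx (f : ℝ × ℝ × ℝ → ℝ) (p : ℝ × ℝ × ℝ) : ℝ :=
  deriv (fun s => f (p.1, s, p.2.2)) p.2.1

/-- Partial derivative with respect to `y`. -/
noncomputable def Dy (f : ℝ × ℝ × ℝ → ℝ) (p : ℝ × ℝ × ℝ) : ℝ :=
  deriv (fun s => f (p.1, p.2.1, s)) p.2.2

/-- `u` is a smooth solution of the dispersionless Nyzhnyk equation
`u_txy = (u_xx·u_xy)_x + (u_xy·u_yy)_y` on `D`. -/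
def IsDNSolOn (u : ℝ × ℝ × ℝ → ℝ) (D : Set (ℝ × ℝ × ℝ)) : Prop :=
  ContDiffOn ℝ (⊤ : ℕ∞) u D ∧
    ∀ p ∈ D, Dt (Dx (Dy u)) p =
      Dx (fun q => Dx (Dx u) q * Dx (Dy u) q) p +
        Dy (fun q => Dx (Dy u) q * Dy (Dy u) q) p

/-!
Along the ansatz, `u_xx = h`, `u_xy = -h/ρ` and `u_yy = h/ρ² - ρ'y/ρ`, evaluated at
`(ζ(t), y/ρ(t) - x)`, where `h = ∂₂²w` solves the inviscid Burgers equation `∂₁h + h ∂₂h = 0`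
by the reduced equation. The Nyzhnyk equation only involves these second derivatives; after
substituting them and `∂₁h = -h ∂₂h`, the terms in `ρ'` cancel identically and the coefficients
of `h ∂₂h` agree exactly when `ζ' = 2 - 2/ρ³`.
-/

section PartialDerivatives

variable {f : ℝ × ℝ → ℝ} {p : ℝ × ℝ}

theorem d1_eq_fderiv (hf : DifferentiableAt ℝ f p) : d1 f p = fderiv ℝ f p (1, 0) := by
  have h : HasDerivAt (fun s : ℝ => (s, p.2)) ((1 : ℝ), (0 : ℝ)) p.1 :=
    (hasDerivAt_id p.1).prodMk (hasDerivAt_const p.1 p.2)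
  simpa [d1, Function.comp_def] using (hf.hasFDerivAt.comp_hasDerivAt p.1 h).deriv

theorem d2_eq_fderiv (hf : DifferentiableAt ℝ f p) : d2 f p = fderiv ℝ f p (0, 1) := by
  have h : HasDerivAt (fun s : ℝ => (p.1, s)) ((0 : ℝ), (1 : ℝ)) p.2 :=
    (hasDerivAt_const p.2 p.1).prodMk (hasDerivAt_id p.2)
  simpa [d2, Function.comp_def] using (hf.hasFDerivAt.comp_hasDerivAt p.2 h).deriv

theorem contDiff_d2 {n : WithTop ℕ∞} (hf : ContDiff ℝ (n + 1) f) : ContDiff ℝ n (d2 f) := by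
  have he : d2 f = fun p => fderiv ℝ f p (0, 1) :=
    funext fun p => d2_eq_fderiv (hf.differentiable (by simp) p)
  rw [he]
  exact (hf.fderiv_right le_rfl).clm_apply contDiff_const

theorem DifferentiableAt.hasDerivAt_comp_prodMk {α β : ℝ → ℝ} {α' β' s : ℝ}
    (hf : DifferentiableAt ℝ f (α s, β s)) (hα : HasDerivAt α α' s) (hβ : HasDerivAt β β' s) :
    HasDerivAt (fun r => f (α r, β r)) (α' * d1 f (α s, β s) + β' * d2 f (α s, β s)) s := by
  have hsplit : ((α', β') : ℝ × ℝ) = α' • ((1 : ℝ), (0 : ℝ)) + β' • ((0 : ℝ), (1 : ℝ)) := by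
    simp
  have h := hf.hasFDerivAt.comp_hasDerivAt s (hα.prodMk hβ)
  rwa [hsplit, map_add, map_smul, map_smul, smul_eq_mul, smul_eq_mul, ← d1_eq_fderiv hf,
    ← d2_eq_fderiv hf] at h

end PartialDerivatives

theorem Dx_eq_of_hasDerivAt {F : ℝ × ℝ × ℝ → ℝ} {G : ℝ → ℝ} {c t x y : ℝ}
    (hF : ∀ s, F (t, s, y) = G s) (hG : HasDerivAt G c x) : Dx F (t, x, y) = c := by
  rw [Dx, show (fun s => F (t, s, y)) = G from funext hF]
  exact hG.deriv

theorem Dy_eq_of_hasDerivAt {F : ℝ × ℝ × ℝ → ℝ} {G : ℝ → ℝ} {c t x y : ℝ}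
    (hF : ∀ s, F (t, x, s) = G s) (hG : HasDerivAt G c y) : Dy F (t, x, y) = c := by
  rw [Dy, show (fun s => F (t, x, s)) = G from funext hF]
  exact hG.deriv

theorem Dt_eq_of_hasDerivAt {F : ℝ × ℝ × ℝ → ℝ} {G : ℝ → ℝ} {c t x y : ℝ}
    (hF : ∀ s, F (s, x, y) = G s) (hG : HasDerivAt G c t) : Dt F (t, x, y) = c := by
  rw [Dt, show (fun s => F (s, x, y)) = G from funext hF]
  exact hG.deriv

noncomputable def reductionCoords (ρ ζ : ℝ → ℝ) (q : ℝ × ℝ × ℝ) : ℝ × ℝ :=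
  (ζ q.1, q.2.2 / ρ q.1 - q.2.1)

section ReductionCoords

variable {ρ ζ : ℝ → ℝ} {g : ℝ × ℝ → ℝ} {t x y : ℝ}

theorem contDiffOn_reductionCoords {n : WithTop ℕ∞} {I : Set ℝ} (hρ : ContDiffOn ℝ n ρ I)
    (hρ0 : ∀ t ∈ I, ρ t ≠ 0) (hζ : ContDiffOn ℝ n ζ I) :
    ContDiffOn ℝ n (reductionCoords ρ ζ) {q | q.1 ∈ I} := by
  have hfst : Set.MapsTo Prod.fst {q : ℝ × ℝ × ℝ | q.1 ∈ I} I := fun _ hq => hq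
  refine (hζ.comp contDiff_fst.contDiffOn hfst).prodMk ((ContDiffOn.div ?_
    (hρ.comp contDiff_fst.contDiffOn hfst) fun q hq => hρ0 q.1 hq).sub ?_)
  · exact (contDiff_snd.comp contDiff_snd).contDiffOn
  · exact (contDiff_fst.comp contDiff_snd).contDiffOn

theorem hasDerivAt_comp_reductionCoords_x
    (hg : DifferentiableAt ℝ g (reductionCoords ρ ζ (t, x, y))) :
    HasDerivAt (fun s => g (reductionCoords ρ ζ (t, s, y)))
      (-d2 g (reductionCoords ρ ζ (t, x, y))) x := by
  refine (hg.hasDerivAt_comp_prodMk (hasDerivAt_const x (ζ t))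
    ((hasDerivAt_id x).const_sub (y / ρ t))).congr_deriv ?_
  simp [reductionCoords]

theorem hasDerivAt_comp_reductionCoords_y
    (hg : DifferentiableAt ℝ g (reductionCoords ρ ζ (t, x, y))) :
    HasDerivAt (fun s => g (reductionCoords ρ ζ (t, x, s)))
      (d2 g (reductionCoords ρ ζ (t, x, y)) / ρ t) y := by
  refine (hg.hasDerivAt_comp_prodMk (hasDerivAt_const y (ζ t))
    (((hasDerivAt_id y).div_const (ρ t)).sub_const x)).congr_deriv ?_
  simp [reductionCoords, div_eq_inv_mul]

theorem hasDerivAt_comp_reductionCoords_t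
    (hg : DifferentiableAt ℝ g (reductionCoords ρ ζ (t, x, y)))
    (hρ : DifferentiableAt ℝ ρ t) (hρ0 : ρ t ≠ 0) (hζ : DifferentiableAt ℝ ζ t) :
    HasDerivAt (fun s => g (reductionCoords ρ ζ (s, x, y)))
      (deriv ζ t * d1 g (reductionCoords ρ ζ (t, x, y))
        - y * deriv ρ t / ρ t ^ 2 * d2 g (reductionCoords ρ ζ (t, x, y))) t := by
  refine (hg.hasDerivAt_comp_prodMk hζ.hasDerivAt
    (((hasDerivAt_const t y).div hρ.hasDerivAt hρ0).sub_const x)).congr_deriv ?_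
  simp only [reductionCoords, Pi.div_apply]
  ring

end ReductionCoords

noncomputable def nyzhnykAnsatz (ρ ζ : ℝ → ℝ) (w : ℝ × ℝ → ℝ) (q : ℝ × ℝ × ℝ) : ℝ :=
  w (reductionCoords ρ ζ q) - deriv ρ q.1 / (6 * ρ q.1) * q.2.2 ^ 3

section Ansatz

variable {ρ ζ : ℝ → ℝ} {w : ℝ × ℝ → ℝ} {t x y : ℝ}

theorem Dx_nyzhnykAnsatz (hw : Differentiable ℝ w) :
    Dx (nyzhnykAnsatz ρ ζ w) (t, x, y) = -d2 w (reductionCoords ρ ζ (t, x, y)) :=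
  Dx_eq_of_hasDerivAt
    (G := fun s => w (reductionCoords ρ ζ (t, s, y)) - deriv ρ t / (6 * ρ t) * y ^ 3)
    (fun _ => rfl) ((hasDerivAt_comp_reductionCoords_x (hw _)).sub_const _)

theorem Dy_nyzhnykAnsatz (hw : Differentiable ℝ w) :
    Dy (nyzhnykAnsatz ρ ζ w) (t, x, y) =
      d2 w (reductionCoords ρ ζ (t, x, y)) / ρ t - deriv ρ t / (2 * ρ t) * y ^ 2 := by
  refine Dy_eq_of_hasDerivAt (G := fun s => w (reductionCoords ρ ζ (t, x, s))
      - deriv ρ t / (6 * ρ t) * s ^ 3) (fun _ => rfl)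
    (((hasDerivAt_comp_reductionCoords_y (hw _)).sub
      ((hasDerivAt_pow 3 y).const_mul _)).congr_deriv ?_)
  field_simp
  ring

theorem Dx_Dx_nyzhnykAnsatz (hw : Differentiable ℝ w) (hw2 : Differentiable ℝ (d2 w)) :
    Dx (Dx (nyzhnykAnsatz ρ ζ w)) (t, x, y) = d2 (d2 w) (reductionCoords ρ ζ (t, x, y)) := by
  refine Dx_eq_of_hasDerivAt (fun _ => Dx_nyzhnykAnsatz hw)
    ((hasDerivAt_comp_reductionCoords_x (hw2 _)).neg.congr_deriv ?_)
  ring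

theorem Dx_Dy_nyzhnykAnsatz (hw : Differentiable ℝ w) (hw2 : Differentiable ℝ (d2 w)) :
    Dx (Dy (nyzhnykAnsatz ρ ζ w)) (t, x, y) =
      -d2 (d2 w) (reductionCoords ρ ζ (t, x, y)) / ρ t := by
  refine Dx_eq_of_hasDerivAt (fun _ => Dy_nyzhnykAnsatz hw)
    ((((hasDerivAt_comp_reductionCoords_x (hw2 _)).div_const _).sub_const _).congr_deriv ?_)
  ring

theorem Dy_Dy_nyzhnykAnsatz (hw : Differentiable ℝ w) (hw2 : Differentiable ℝ (d2 w)) :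
    Dy (Dy (nyzhnykAnsatz ρ ζ w)) (t, x, y) =
      d2 (d2 w) (reductionCoords ρ ζ (t, x, y)) / ρ t ^ 2 - deriv ρ t / ρ t * y := by
  refine Dy_eq_of_hasDerivAt (fun _ => Dy_nyzhnykAnsatz hw)
    ((((hasDerivAt_comp_reductionCoords_y (hw2 _)).div_const _).sub
      ((hasDerivAt_pow 2 y).const_mul _)).congr_deriv ?_)
  field_simp
  ring

theorem contDiffOn_nyzhnykAnsatz {n : WithTop ℕ∞} {I : Set ℝ} (hI : IsOpen I)
    (hρ : ContDiffOn ℝ (n + 1) ρ I) (hρ0 : ∀ t ∈ I, ρ t ≠ 0) (hζ : ContDiffOn ℝ n ζ I)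
    (hw : ContDiff ℝ n w) :
    ContDiffOn ℝ n (nyzhnykAnsatz ρ ζ w) {q | q.1 ∈ I} := by
  have hfst : Set.MapsTo Prod.fst {q : ℝ × ℝ × ℝ | q.1 ∈ I} I := fun _ hq => hq
  have hcoeff :
      ContDiffOn ℝ n (fun q : ℝ × ℝ × ℝ => deriv ρ q.1 / (6 * ρ q.1)) {q | q.1 ∈ I} :=
    ((hρ.deriv_of_isOpen hI le_rfl).comp contDiff_fst.contDiffOn hfst).div
      (contDiffOn_const.mul ((hρ.of_le le_self_add).comp contDiff_fst.contDiffOn hfst))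
      fun q hq => mul_ne_zero (by norm_num) (hρ0 q.1 hq)
  exact (hw.comp_contDiffOn (contDiffOn_reductionCoords (hρ.of_le le_self_add) hρ0 hζ)).sub
    (hcoeff.mul ((contDiff_snd.comp contDiff_snd).contDiffOn.pow 3))

end Ansatz

theorem dn_equation_of_burgers {ρ ζ : ℝ → ℝ} {h : ℝ × ℝ → ℝ} {u : ℝ × ℝ × ℝ → ℝ}
    {t x y : ℝ} (hh : Differentiable ℝ h)
    (hburgers : d1 h (reductionCoords ρ ζ (t, x, y))
      + h (reductionCoords ρ ζ (t, x, y)) * d2 h (reductionCoords ρ ζ (t, x, y)) = 0)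
    (hxx : ∀ q, Dx (Dx u) q = h (reductionCoords ρ ζ q))
    (hxy : ∀ q, Dx (Dy u) q = -h (reductionCoords ρ ζ q) / ρ q.1)
    (hyy : ∀ q, Dy (Dy u) q =
      h (reductionCoords ρ ζ q) / ρ q.1 ^ 2 - deriv ρ q.1 / ρ q.1 * q.2.2)
    (hρ : DifferentiableAt ℝ ρ t) (hρ0 : ρ t ≠ 0) (hζ : DifferentiableAt ℝ ζ t)
    (hζ' : deriv ζ t = 2 * (ρ t ^ 3 - 1) / ρ t ^ 3) :
    Dt (Dx (Dy u)) (t, x, y) =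
      Dx (fun q => Dx (Dx u) q * Dx (Dy u) q) (t, x, y) +
        Dy (fun q => Dx (Dy u) q * Dy (Dy u) q) (t, x, y) := by
  have hx := hasDerivAt_comp_reductionCoords_x (ρ := ρ) (ζ := ζ) (t := t) (x := x) (y := y) (hh _)
  have hy := hasDerivAt_comp_reductionCoords_y (ρ := ρ) (ζ := ζ) (t := t) (x := x) (y := y) (hh _)
  have ht := hasDerivAt_comp_reductionCoords_t (x := x) (y := y) (hh _) hρ hρ0 hζ
  set r := reductionCoords ρ ζ (t, x, y) with hr
  have htxy : Dt (Dx (Dy u)) (t, x, y) =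
      deriv ρ t * h r / ρ t ^ 2 - deriv ζ t * d1 h r / ρ t
        + y * deriv ρ t * d2 h r / ρ t ^ 3 :=
    Dt_eq_of_hasDerivAt (fun s => hxy (s, x, y))
      ((ht.neg.div hρ.hasDerivAt hρ0).congr_deriv
        (by simp only [Pi.neg_apply, ← hr]; field_simp; ring))
  have hx_flux : Dx (fun q => Dx (Dx u) q * Dx (Dy u) q) (t, x, y) = 2 * h r * d2 h r / ρ t :=
    Dx_eq_of_hasDerivAt (G := fun s => h (reductionCoords ρ ζ (t, s, y)) *
        (-h (reductionCoords ρ ζ (t, s, y)) / ρ t)) (fun _ => by rw [hxx, hxy])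
      ((hx.mul (hx.neg.div_const (ρ t))).congr_deriv (by simp only [Pi.neg_apply, ← hr]; ring))
  have hy_flux : Dy (fun q => Dx (Dy u) q * Dy (Dy u) q) (t, x, y) =
      -2 * h r * d2 h r / ρ t ^ 4 + deriv ρ t * h r / ρ t ^ 2
        + y * deriv ρ t * d2 h r / ρ t ^ 3 :=
    Dy_eq_of_hasDerivAt (G := fun s => -h (reductionCoords ρ ζ (t, x, s)) / ρ t *
        (h (reductionCoords ρ ζ (t, x, s)) / ρ t ^ 2 - deriv ρ t / ρ t * s))
      (fun _ => by rw [hxy, hyy])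
      (((hy.neg.div_const (ρ t)).mul
        ((hy.div_const _).sub ((hasDerivAt_id y).const_mul _))).congr_deriv
          (by simp only [Pi.neg_apply, Pi.sub_apply, id, ← hr]; field_simp; ring))
  rw [htxy, hx_flux, hy_flux, eq_neg_of_add_eq_zero_left hburgers, hζ']
  field_simp
  ring

theorem statement1_general (I : Set ℝ) (hIopen : IsOpen I)
    (ρ ζ : ℝ → ℝ) (hρ : ContDiffOn ℝ (⊤ : ℕ∞) ρ I) (hρ0 : ∀ t ∈ I, ρ t ≠ 0)
    (hζ : ContDiffOn ℝ (⊤ : ℕ∞) ζ I)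
    (hζ' : ∀ t ∈ I, deriv ζ t = 2 * (ρ t ^ 3 - 1) / ρ t ^ 3)
    (w : ℝ × ℝ → ℝ) (hw : ContDiff ℝ (⊤ : ℕ∞) w)
    (hweq : ∀ p, d1 (d2 (d2 w)) p + d2 (d2 w) p * d2 (d2 (d2 w)) p = 0)
    (u : ℝ × ℝ × ℝ → ℝ)
    (hu : ∀ t x y, u (t, x, y) =
      w (ζ t, y / ρ t - x) - deriv ρ t / (6 * ρ t) * y ^ 3) :
    IsDNSolOn u {p : ℝ × ℝ × ℝ | p.1 ∈ I} := by
  obtain rfl : u = nyzhnykAnsatz ρ ζ w := funext fun ⟨t, x, y⟩ => hu t x y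
  have hw' : ContDiff ℝ (⊤ : ℕ∞) (d2 w) := contDiff_d2 (by simpa using hw)
  have hw'' : ContDiff ℝ (⊤ : ℕ∞) (d2 (d2 w)) := contDiff_d2 (by simpa using hw')
  have hdiff {f : ℝ × ℝ → ℝ} (hf : ContDiff ℝ (⊤ : ℕ∞) f) : Differentiable ℝ f :=
    hf.differentiable (by simp)
  refine ⟨contDiffOn_nyzhnykAnsatz hIopen (by simpa using hρ) hρ0 hζ hw, ?_⟩
  rintro ⟨t, x, y⟩ (ht : t ∈ I)
  have hdiffAt {f : ℝ → ℝ} (hf : ContDiffOn ℝ (⊤ : ℕ∞) f I) : DifferentiableAt ℝ f t :=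
    (hf.contDiffAt (hIopen.mem_nhds ht)).differentiableAt (by simp)
  exact dn_equation_of_burgers (hdiff hw'') (hweq _)
    (fun ⟨_, _, _⟩ => Dx_Dx_nyzhnykAnsatz (hdiff hw) (hdiff hw'))
    (fun ⟨_, _, _⟩ => Dx_Dy_nyzhnykAnsatz (hdiff hw) (hdiff hw'))
    (fun ⟨_, _, _⟩ => Dy_Dy_nyzhnykAnsatz (hdiff hw) (hdiff hw'))
    (hdiffAt hρ) (hρ0 t ht) (hdiffAt hζ) (hζ' t ht)

/-- If `ρ` is smooth and nowhere zero on an open interval `I`,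
`ζ' = 2(ρ³−1)/ρ³` on `I`, and `w` is a smooth solution of the reduced equation on `ℝ²`,
then `u(t,x,y) = w(ζ(t), y/ρ(t) − x) − (ρ'(t)/(6ρ(t)))·y³` is a smooth solution of the
dispersionless Nyzhnyk equation on `I × ℝ²`. -/
theorem statement1 (I : Set ℝ) (hIopen : IsOpen I) (hIint : I.OrdConnected)
    (ρ ζ : ℝ → ℝ) (hρ : ContDiffOn ℝ (⊤ : ℕ∞) ρ I) (hρ0 : ∀ t ∈ I, ρ t ≠ 0)
    (hζ : ContDiffOn ℝ (⊤ : ℕ∞) ζ I)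
    (hζ' : ∀ t ∈ I, deriv ζ t = 2 * (ρ t ^ 3 - 1) / ρ t ^ 3)
    (w : ℝ × ℝ → ℝ) (hw : ContDiff ℝ (⊤ : ℕ∞) w)
    (hweq : ∀ p, d1 (d2 (d2 w)) p + d2 (d2 w) p * d2 (d2 (d2 w)) p = 0)
    (u : ℝ × ℝ × ℝ → ℝ)
    (hu : ∀ t x y, u (t, x, y) =
      w (ζ t, y / ρ t - x) - deriv ρ t / (6 * ρ t) * y ^ 3) :
    IsDNSolOn u {p : ℝ × ℝ × ℝ | p.1 ∈ I} :=
  statement1_general I hIopen ρ ζ hρ hρ0 hζ hζ' w hw hweq u hu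
end

section
/- The radical of the Lie algebra 𝔞 (i.e. the supremum of all solvable Lie ideals of 𝔞) equals the ideal 𝔯 := {c₁P¹ + c₂D¹ + c₃K + c₄D² + c₅P² + c₆H + R(α) + Z(σ) ∈ 𝔞 : c₁ = c₂ = c₃ = 0}, i.e. the subspace spanned by D², P², H and all R(α), Z(σ). -/
/-!
The ideal `𝔯` is solvable because `⁅𝔞, 𝔯⁆ ⊆ 𝔯₁ = ⟨P², H, R(α), Z(σ)⟩`, `⁅𝔯₁, 𝔯₁⁆ ⊆ 𝔯₂ = ⟨R(α), Z(σ)⟩`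
and `𝔯₂` is abelian. Conversely `(-(2D¹ + D²), P¹, -K)` is an `𝔰𝔩₂`-triple, and an ideal containing
the `e` of an `𝔰𝔩₂`-triple contains the whole triple, hence so does every term of its derived series,
so it is not solvable. If a solvable ideal `J` were not contained in `𝔯`, the solvable ideal `J + 𝔯`
would contain some `aP¹ + bD¹ + cK ≠ 0`, and bracketing with `P¹` at most twice puts `P¹` into it.
-/

/-- The space `S` of smooth functions `ℝ → ℝ`, as a submodule of `ℝ → ℝ`. -/
def SmoothFn : Submodule ℝ (ℝ → ℝ) where
  carrier := {f | ContDiff ℝ (⊤ : ℕ∞) f}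
  add_mem' := fun {a b} (hf : ContDiff ℝ (⊤ : ℕ∞) a) (hg : ContDiff ℝ (⊤ : ℕ∞) b) =>
    hf.add hg
  zero_mem' := show ContDiff ℝ (⊤ : ℕ∞) (0 : ℝ → ℝ) from contDiff_const
  smul_mem' := fun c f (hf : ContDiff ℝ (⊤ : ℕ∞) f) => hf.const_smul c

/-- The derivative `α′` of a smooth function `α`. -/
noncomputable def sder (α : SmoothFn) : SmoothFn :=
  ⟨deriv α.1, (contDiff_infty_iff_deriv.mp (show ContDiff ℝ (⊤ : ℕ∞) α.1 from α.2)).2⟩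

/-- Multiplication of a smooth function by the identity function `s(x) = x`. -/
def xmul (α : SmoothFn) : SmoothFn :=
  ⟨fun x => x * α.1 x,
    contDiff_id.mul (show ContDiff ℝ (⊤ : ℕ∞) α.1 from α.2)⟩

/-- The constant function `1` as a smooth function. -/
def oneS : SmoothFn := ⟨fun _ => 1, show ContDiff ℝ (⊤ : ℕ∞) _ from contDiff_const⟩

namespace LieIdeal

variable {R L : Type*} [CommRing R] [LieRing L] [LieAlgebra R L]

theorem isSolvable_of_lie_mem_chain {I : LieIdeal R L} (N : ℕ → Submodule R L)
    (hI : ∀ x ∈ I, x ∈ N 0) (hN : ∀ k, ∀ x ∈ N k, ∀ y ∈ N k, ⁅x, y⁆ ∈ N (k + 1)) {n : ℕ}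
    (hn : N n = ⊥) : LieAlgebra.IsSolvable I := by
  have hD : ∀ k, ∀ x ∈ LieAlgebra.derivedSeriesOfIdeal R L k I, x ∈ N k := by
    intro k
    induction k with
    | zero => exact hI
    | succ k ih =>
      intro x hx
      rw [LieAlgebra.derivedSeriesOfIdeal_succ, ← LieSubmodule.mem_toSubmodule,
        LieSubmodule.lieIdeal_oper_eq_linear_span'] at hx
      refine Submodule.span_le.mpr ?_ hx
      rintro _ ⟨x, hx, y, hy, rfl⟩
      exact hN k x (ih x hx) y (ih y hy)
  refine LieAlgebra.IsSolvable.mk (k := n) ((derivedSeries_eq_bot_iff I n).mpr ?_)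
  rw [eq_bot_iff]
  intro x hx
  simpa [hn] using hD n x hx

end LieIdeal

theorem LieAlgebra.radical_eq_of_isSolvable {R L : Type*} [CommRing R] [LieRing L]
    [LieAlgebra R L] {I : LieIdeal R L} (hI : IsSolvable I)
    (hmax : ∀ J : LieIdeal R L, I ≤ J → IsSolvable J → J ≤ I) : radical R L = I := by
  refine le_antisymm (sSup_le fun J (hJ : IsSolvable J) => ?_) (le_sSup hI)
  exact le_sup_left.trans (hmax (J + I) le_sup_right (isSolvableAdd R L))

namespace IsSl2Triple

variable {R L : Type*} [CommRing R] [Invertible (2 : R)] [LieRing L] [LieAlgebra R L] {h e f : L}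

theorem mem_lie_self (t : IsSl2Triple h e f) {I : LieIdeal R L} (he : e ∈ I) (hf : f ∈ I) :
    e ∈ ⁅I, I⁆ ∧ f ∈ ⁅I, I⁆ := by
  have hh : h ∈ I := t.lie_e_f ▸ I.lie_mem hf
  constructor
  · have := LieSubmodule.lie_mem_lie hh he
    rw [t.lie_h_e_smul R] at this
    simpa using SMulMemClass.smul_mem (⅟2 : R) this
  · have := LieSubmodule.lie_mem_lie hh hf
    rw [t.lie_lie_smul_f R] at this
    simpa using SMulMemClass.smul_mem (-⅟2 : R) this

theorem not_isSolvable (t : IsSl2Triple h e f) {I : LieIdeal R L} (he : e ∈ I) :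
    ¬ LieAlgebra.IsSolvable I := by
  intro hI
  have hf : f ∈ I := by
    have hh : h ∈ I := t.lie_e_f ▸ lie_mem_left R L I e f he
    have := lie_mem_left R L I h f hh
    rw [t.lie_lie_smul_f R] at this
    simpa using SMulMemClass.smul_mem (-⅟2 : R) this
  have hD : ∀ k, e ∈ LieAlgebra.derivedSeriesOfIdeal R L k I ∧
      f ∈ LieAlgebra.derivedSeriesOfIdeal R L k I := by
    intro k
    induction k with
    | zero => exact ⟨he, hf⟩
    | succ k ih =>
      rw [LieAlgebra.derivedSeriesOfIdeal_succ]
      exact t.mem_lie_self ih.1 ih.2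
  obtain ⟨k, hk⟩ := (LieAlgebra.isSolvable_iff R I).mp hI
  rw [LieIdeal.derivedSeries_eq_bot_iff] at hk
  exact t.e_ne_zero (by simpa [hk] using (hD k).1)

end IsSl2Triple

namespace InvarianceAlgebra

variable {A : Type*} [LieRing A] [LieAlgebra ℝ A]

structure Relations (P1 D1 K D2 P2 H : A) (R Z : SmoothFn →ₗ[ℝ] A) : Prop where
  lie_P1_D1 : ⁅P1, D1⁆ = P1
  lie_P1_K : ⁅P1, K⁆ = (2 : ℝ) • D1 + D2
  lie_D1_K : ⁅D1, K⁆ = K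
  lie_P1_H : ⁅P1, H⁆ = P2
  lie_P1_R : ∀ α, ⁅P1, R α⁆ = R (sder α)
  lie_P1_Z : ∀ σ, ⁅P1, Z σ⁆ = Z (sder σ)
  lie_D1_H : ⁅D1, H⁆ = H
  lie_D1_R : ∀ α, ⁅D1, R α⁆ = R (xmul (sder α) + α)
  lie_D1_Z : ∀ σ, ⁅D1, Z σ⁆ = Z (xmul (sder σ) + σ)
  lie_K_P2 : ⁅K, P2⁆ = -H
  lie_K_R : ∀ α, ⁅K, R α⁆ = R (xmul (xmul (sder α)))
  lie_K_Z : ∀ σ, ⁅K, Z σ⁆ = Z (xmul (xmul (sder σ)) - xmul σ)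
  lie_D2_P2 : ⁅D2, P2⁆ = -P2
  lie_D2_H : ⁅D2, H⁆ = -H
  lie_D2_R : ∀ α, ⁅D2, R α⁆ = (-2 : ℝ) • R α
  lie_D2_Z : ∀ σ, ⁅D2, Z σ⁆ = (-3 : ℝ) • Z σ
  lie_P2_H : ⁅P2, H⁆ = R oneS
  lie_P2_R : ∀ α, ⁅P2, R α⁆ = Z α
  lie_H_R : ∀ α, ⁅H, R α⁆ = Z (xmul α)
  lie_P1_D2 : ⁅P1, D2⁆ = 0
  lie_P1_P2 : ⁅P1, P2⁆ = 0
  lie_D1_D2 : ⁅D1, D2⁆ = 0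
  lie_D1_P2 : ⁅D1, P2⁆ = 0
  lie_K_D2 : ⁅K, D2⁆ = 0
  lie_K_H : ⁅K, H⁆ = 0
  lie_P2_Z : ∀ σ, ⁅P2, Z σ⁆ = 0
  lie_H_Z : ∀ σ, ⁅H, Z σ⁆ = 0
  lie_R_R : ∀ α β, ⁅R α, R β⁆ = 0
  lie_R_Z : ∀ α σ, ⁅R α, Z σ⁆ = 0
  lie_Z_Z : ∀ σ τ, ⁅Z σ, Z τ⁆ = 0

section Subspaces

variable (D2 P2 H : A) (R Z : SmoothFn →ₗ[ℝ] A)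

def 𝔯 : Submodule ℝ A where
  carrier := {x | ∃ (c₄ c₅ c₆ : ℝ) (α σ : SmoothFn), x = c₄ • D2 + c₅ • P2 + c₆ • H + R α + Z σ}
  add_mem' := by
    rintro _ _ ⟨a, b, c, α, σ, rfl⟩ ⟨a', b', c', α', σ', rfl⟩
    exact ⟨a + a', b + b', c + c', α + α', σ + σ', by simp only [map_add]; module⟩
  zero_mem' := ⟨0, 0, 0, 0, 0, by simp⟩
  smul_mem' := by
    rintro r _ ⟨a, b, c, α, σ, rfl⟩
    exact ⟨r * a, r * b, r * c, r • α, r • σ, by simp only [map_smul]; module⟩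

def 𝔯₁ : Submodule ℝ A where
  carrier := {x | ∃ (c₅ c₆ : ℝ) (α σ : SmoothFn), x = c₅ • P2 + c₆ • H + R α + Z σ}
  add_mem' := by
    rintro _ _ ⟨b, c, α, σ, rfl⟩ ⟨b', c', α', σ', rfl⟩
    exact ⟨b + b', c + c', α + α', σ + σ', by simp only [map_add]; module⟩
  zero_mem' := ⟨0, 0, 0, 0, by simp⟩
  smul_mem' := by
    rintro r _ ⟨b, c, α, σ, rfl⟩
    exact ⟨r * b, r * c, r • α, r • σ, by simp only [map_smul]; module⟩

def 𝔯₂ : Submodule ℝ A where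
  carrier := {x | ∃ α σ : SmoothFn, x = R α + Z σ}
  add_mem' := by
    rintro _ _ ⟨α, σ, rfl⟩ ⟨α', σ', rfl⟩
    exact ⟨α + α', σ + σ', by simp only [map_add]; module⟩
  zero_mem' := ⟨0, 0, by simp⟩
  smul_mem' := by
    rintro r _ ⟨α, σ, rfl⟩
    exact ⟨r • α, r • σ, by simp only [map_smul]; module⟩

end Subspaces

variable {P1 D1 K D2 P2 H : A} {R Z : SmoothFn →ₗ[ℝ] A}

lemma P2_mem_𝔯₁ : P2 ∈ 𝔯₁ P2 H R Z := ⟨1, 0, 0, 0, by simp⟩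

lemma H_mem_𝔯₁ : H ∈ 𝔯₁ P2 H R Z := ⟨0, 1, 0, 0, by simp⟩

lemma R_mem_𝔯₁ (α : SmoothFn) : R α ∈ 𝔯₁ P2 H R Z := ⟨0, 0, α, 0, by simp⟩

lemma Z_mem_𝔯₁ (σ : SmoothFn) : Z σ ∈ 𝔯₁ P2 H R Z := ⟨0, 0, 0, σ, by simp⟩

lemma R_mem_𝔯₂ (α : SmoothFn) : R α ∈ 𝔯₂ R Z := ⟨α, 0, by simp⟩

lemma Z_mem_𝔯₂ (σ : SmoothFn) : Z σ ∈ 𝔯₂ R Z := ⟨0, σ, by simp⟩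

lemma 𝔯₁_le_𝔯 : 𝔯₁ P2 H R Z ≤ 𝔯 D2 P2 H R Z := by
  rintro _ ⟨b, c, α, σ, rfl⟩
  exact ⟨0, b, c, α, σ, by simp⟩

lemma exists_eq_add_mem_𝔯 (hbasis : Function.Surjective
      (fun v : (Fin 6 → ℝ) × SmoothFn × SmoothFn =>
        v.1 0 • P1 + v.1 1 • D1 + v.1 2 • K + v.1 3 • D2 + v.1 4 • P2 + v.1 5 • H
          + R v.2.1 + Z v.2.2)) (y : A) :
    ∃ a b c : ℝ, ∃ r ∈ 𝔯 D2 P2 H R Z, y = a • P1 + b • D1 + c • K + r := by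
  obtain ⟨v, rfl⟩ := hbasis y
  exact ⟨v.1 0, v.1 1, v.1 2, _, ⟨v.1 3, v.1 4, v.1 5, v.2.1, v.2.2, rfl⟩, by dsimp only; abel⟩

variable (hA : Relations P1 D1 K D2 P2 H R Z)
  (hspan : ∀ y : A, ∃ a b c : ℝ, ∃ r ∈ 𝔯 D2 P2 H R Z, y = a • P1 + b • D1 + c • K + r)
include hA

include hspan in
lemma lie_mem_𝔯₁ (y : A) {x : A} (hx : x ∈ 𝔯 D2 P2 H R Z) :
    ⁅y, x⁆ ∈ 𝔯₁ P2 H R Z := by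
  obtain ⟨a, b, c, _, ⟨a', b', c', β, τ, rfl⟩, rfl⟩ := hspan y
  obtain ⟨d, e, f, α, σ, rfl⟩ := hx
  simp only [add_lie, lie_add, smul_lie, lie_smul, lie_self, hA.lie_P1_D2, hA.lie_P1_P2,
    hA.lie_P1_H, hA.lie_P1_R, hA.lie_P1_Z, hA.lie_D1_D2, hA.lie_D1_P2, hA.lie_D1_H, hA.lie_D1_R,
    hA.lie_D1_Z, hA.lie_K_D2, hA.lie_K_P2, hA.lie_K_H, hA.lie_K_R, hA.lie_K_Z,
    hA.lie_D2_P2, hA.lie_D2_H, hA.lie_D2_R, hA.lie_D2_Z,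
    ← lie_skew P2 D2, hA.lie_P2_H, hA.lie_P2_R, hA.lie_P2_Z,
    ← lie_skew H D2, ← lie_skew H P2, hA.lie_H_R, hA.lie_H_Z,
    ← lie_skew (R _) D2, ← lie_skew (R _) P2, ← lie_skew (R _) H, hA.lie_R_R, hA.lie_R_Z,
    ← lie_skew (Z _) D2, ← lie_skew (Z _) P2, ← lie_skew (Z _) H, ← lie_skew (Z _) (R _),
    hA.lie_Z_Z, smul_zero, neg_zero, add_zero, zero_add]
  apply_rules (maxDepth := 200)
    [add_mem, Submodule.smul_mem, neg_mem, P2_mem_𝔯₁, H_mem_𝔯₁, R_mem_𝔯₁, Z_mem_𝔯₁]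

lemma lie_mem_𝔯₂ {x y : A} (hx : x ∈ 𝔯₁ P2 H R Z) (hy : y ∈ 𝔯₁ P2 H R Z) :
    ⁅x, y⁆ ∈ 𝔯₂ R Z := by
  obtain ⟨a, b, α, σ, rfl⟩ := hx
  obtain ⟨c, d, β, τ, rfl⟩ := hy
  simp only [add_lie, lie_add, smul_lie, lie_smul, lie_self, hA.lie_P2_H, hA.lie_P2_R,
    hA.lie_P2_Z, ← lie_skew H P2, hA.lie_H_R, hA.lie_H_Z,
    ← lie_skew (R _) P2, ← lie_skew (R _) H, hA.lie_R_R, hA.lie_R_Z,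
    ← lie_skew (Z _) P2, ← lie_skew (Z _) H, ← lie_skew (Z _) (R _), hA.lie_Z_Z,
    smul_zero, neg_zero, add_zero, zero_add]
  apply_rules (maxDepth := 200) [add_mem, Submodule.smul_mem, neg_mem, R_mem_𝔯₂, Z_mem_𝔯₂]

lemma lie_eq_zero_of_mem_𝔯₂ {x y : A} (hx : x ∈ 𝔯₂ R Z) (hy : y ∈ 𝔯₂ R Z) : ⁅x, y⁆ = 0 := by
  obtain ⟨α, σ, rfl⟩ := hx
  obtain ⟨β, τ, rfl⟩ := hy
  simp only [add_lie, lie_add, hA.lie_R_R, hA.lie_R_Z, ← lie_skew (Z _) (R _), hA.lie_Z_Z,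
    neg_zero, add_zero]

def 𝔯Ideal : LieIdeal ℝ A :=
  { 𝔯 D2 P2 H R Z with lie_mem := fun {y _} hx => 𝔯₁_le_𝔯 (lie_mem_𝔯₁ hA hspan y hx) }

lemma isSolvable_𝔯Ideal : LieAlgebra.IsSolvable (𝔯Ideal hA hspan) :=
  LieIdeal.isSolvable_of_lie_mem_chain (n := 3)
    (fun | 0 => 𝔯 D2 P2 H R Z | 1 => 𝔯₁ P2 H R Z | 2 => 𝔯₂ R Z | _ => ⊥)
    (fun _ hx => hx)
    (by
      rintro (_ | _ | _ | k) x hx y hy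
      · exact lie_mem_𝔯₁ hA hspan x hy
      · exact lie_mem_𝔯₂ hA hx hy
      · simp [lie_eq_zero_of_mem_𝔯₂ hA hx hy]
      · simp_all)
    rfl

lemma isSl2Triple (h0 : (2 : ℝ) • D1 + D2 ≠ 0) : IsSl2Triple (-((2 : ℝ) • D1 + D2)) P1 (-K) where
  h_ne_zero := neg_ne_zero.mpr h0
  lie_e_f := by rw [lie_neg, hA.lie_P1_K]
  lie_h_e_nsmul := by
    rw [neg_lie, add_lie, smul_lie, ← lie_skew D1 P1, ← lie_skew D2 P1, hA.lie_P1_D1,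
      hA.lie_P1_D2]
    module
  lie_h_f_nsmul := by
    rw [neg_lie, lie_neg, neg_neg, add_lie, smul_lie, ← lie_skew D2 K, hA.lie_D1_K, hA.lie_K_D2]
    module

include hspan in
lemma P1_mem_of_notMem_𝔯 {I : LieIdeal ℝ A} (hI : ∀ r ∈ 𝔯 D2 P2 H R Z, r ∈ I) {x : A}
    (hxI : x ∈ I) (hx : x ∉ 𝔯 D2 P2 H R Z) : P1 ∈ I := by
  obtain ⟨a, b, c, r, hr, rfl⟩ := hspan x
  have hy : a • P1 + b • D1 + c • K ∈ I := by simpa using sub_mem hxI (hI r hr)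
  have hP1y : ⁅P1, a • P1 + b • D1 + c • K⁆ = b • P1 + c • ((2 : ℝ) • D1 + D2) := by
    simp only [lie_add, lie_smul, lie_self, hA.lie_P1_D1, hA.lie_P1_K, smul_zero, zero_add]
  have hP1P1y : ⁅P1, ⁅P1, a • P1 + b • D1 + c • K⁆⁆ = (2 * c) • P1 := by
    simp only [hP1y, lie_add, lie_smul, lie_self, hA.lie_P1_D1, hA.lie_P1_D2, smul_zero,
      zero_add, add_zero]
    module
  by_cases hc : c = 0
  · by_cases hb : b = 0
    · have ha : a ≠ 0 := by
        rintro rfl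
        exact hx (by simpa [hb, hc] using hr)
      simp only [hb, hc, zero_smul, add_zero] at hy
      exact (Submodule.smul_mem_iff I.toSubmodule ha).mp hy
    · have h := I.lie_mem (x := P1) hy
      rw [hP1y, hc, zero_smul, add_zero] at h
      exact (Submodule.smul_mem_iff I.toSubmodule hb).mp h
  · have h := I.lie_mem (x := P1) (I.lie_mem (x := P1) hy)
    rw [hP1P1y] at h
    exact (Submodule.smul_mem_iff I.toSubmodule (mul_ne_zero two_ne_zero hc)).mp h

end InvarianceAlgebra

open InvarianceAlgebra

/-- Let `𝔞` be the real Lie algebra with underlying vector space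
`ℝ⁶ ⊕ S ⊕ S`, a general element being `c₁P¹ + c₂D¹ + c₃K + c₄D² + c₅P² + c₆H + R(α) + Z(σ)`,
with the indicated commutation relations (all unlisted brackets of generators vanishing).
Then the radical of `𝔞` (the supremum of all solvable Lie ideals, `LieAlgebra.radical`)
equals `𝔯 = {c₁ = c₂ = c₃ = 0}`, i.e. the span of `D²`, `P²`, `H` and all `R(α)`, `Z(σ)`. -/
theorem statement6 {A : Type*} [LieRing A] [LieAlgebra ℝ A]
    (P1 D1 K D2 P2 H : A) (R Z : SmoothFn →ₗ[ℝ] A)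
    (hbasis : Function.Bijective (fun v : (Fin 6 → ℝ) × SmoothFn × SmoothFn =>
      v.1 0 • P1 + v.1 1 • D1 + v.1 2 • K + v.1 3 • D2 + v.1 4 • P2 + v.1 5 • H
        + R v.2.1 + Z v.2.2))
    (h1 : ⁅P1, D1⁆ = P1)
    (h2 : ⁅P1, K⁆ = (2 : ℝ) • D1 + D2)
    (h3 : ⁅D1, K⁆ = K)
    (h4 : ⁅P1, H⁆ = P2)
    (h5 : ∀ α, ⁅P1, R α⁆ = R (sder α))
    (h6 : ∀ σ, ⁅P1, Z σ⁆ = Z (sder σ))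
    (h7 : ⁅D1, H⁆ = H)
    (h8 : ∀ α, ⁅D1, R α⁆ = R (xmul (sder α) + α))
    (h9 : ∀ σ, ⁅D1, Z σ⁆ = Z (xmul (sder σ) + σ))
    (h10 : ⁅K, P2⁆ = -H)
    (h11 : ∀ α, ⁅K, R α⁆ = R (xmul (xmul (sder α))))
    (h12 : ∀ σ, ⁅K, Z σ⁆ = Z (xmul (xmul (sder σ)) - xmul σ))
    (h13 : ⁅D2, P2⁆ = -P2)
    (h14 : ⁅D2, H⁆ = -H)
    (h15 : ∀ α, ⁅D2, R α⁆ = (-2 : ℝ) • R α)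
    (h16 : ∀ σ, ⁅D2, Z σ⁆ = (-3 : ℝ) • Z σ)
    (h17 : ⁅P2, H⁆ = R oneS)
    (h18 : ∀ α, ⁅P2, R α⁆ = Z α)
    (h19 : ∀ α, ⁅H, R α⁆ = Z (xmul α))
    (z1 : ⁅P1, D2⁆ = 0) (z2 : ⁅P1, P2⁆ = 0)
    (z3 : ⁅D1, D2⁆ = 0) (z4 : ⁅D1, P2⁆ = 0)
    (z5 : ⁅K, D2⁆ = 0) (z6 : ⁅K, H⁆ = 0)
    (z7 : ∀ σ, ⁅P2, Z σ⁆ = 0) (z8 : ∀ σ, ⁅H, Z σ⁆ = 0)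
    (z9 : ∀ α β, ⁅R α, R β⁆ = 0) (z10 : ∀ α σ, ⁅R α, Z σ⁆ = 0)
    (z11 : ∀ σ τ, ⁅Z σ, Z τ⁆ = 0) :
    ∀ x : A, x ∈ LieAlgebra.radical ℝ A ↔
      ∃ (c₄ c₅ c₆ : ℝ) (α σ : SmoothFn),
        x = c₄ • D2 + c₅ • P2 + c₆ • H + R α + Z σ := by
  have hA : Relations P1 D1 K D2 P2 H R Z := ⟨h1, h2, h3, h4, h5, h6, h7, h8, h9, h10, h11, h12,
    h13, h14, h15, h16, h17, h18, h19, z1, z2, z3, z4, z5, z6, z7, z8, z9, z10, z11⟩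
  have hspan := exists_eq_add_mem_𝔯 hbasis.2
  have h0 : (2 : ℝ) • D1 + D2 ≠ 0 := fun h => by
    have := congrArg (fun v => v.1 1)
      (hbasis.1 (a₁ := (![0, 2, 0, 1, 0, 0], 0, 0)) (a₂ := 0) (by simpa using h))
    simp at this
  have hrad : LieAlgebra.radical ℝ A = 𝔯Ideal hA hspan := by
    refine LieAlgebra.radical_eq_of_isSolvable (isSolvable_𝔯Ideal hA hspan)
      fun J h𝔯J hJ x hxJ => ?_
    by_contra hx
    exact (isSl2Triple hA h0).not_isSolvable
      (P1_mem_of_notMem_𝔯 hA hspan (fun _ hr => h𝔯J hr) hxJ hx) hJ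
  intro x
  rw [hrad]
  rfl
end

section
/- Fix K, r ∈ ℕ. Let Ω be an open subset of the space of variables (z₁, z₂, w₀₀, w₁₀, w₀₁, W₀, …, W_{K+1}, ζ¹₀, …, ζ¹_r, ζ²₀, …, ζ²_r) on which W₀ ≠ 0. Define rational functions E_k by E₀ := W₁/W₀ and E_{k+1} := Σ_{j=0}^{k+1} W_{j+1}·∂E_k/∂W_j. Let f be a smooth function on Ω that does not depend on the variable W_{K+1}, and define D̂₂f := ∂f/∂z₂ + w₀₁·∂f/∂w₀₀ + (ζ¹₀ − ½W₀²)·∂f/∂w₁₀ + W₀·∂f/∂w₀₁ − Σ_{k=0}^{K} E_k·∂f/∂W_k. Then D̂₂f vanishes identically on Ω if and only if all the partial derivatives ∂f/∂z₂, ∂f/∂w₀₀, ∂f/∂w₁₀, ∂f/∂w₀₁, and ∂f/∂W_k for k = 0,…,K vanish identically on Ω, i.e. if and only if f depends only on z₁ and ζ¹₀,…,ζ¹_r, ζ²₀,…,ζ²_r. -/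
/-- The coordinate space `(z₁, z₂, w₀₀, w₁₀, w₀₁, W₀, …, W_{K+1}, ζ¹₀, …, ζ¹_r, ζ²₀, …, ζ²_r)`. -/
abbrev Pt7 (K r : ℕ) : Type :=
  ℝ × ℝ × ℝ × ℝ × ℝ × (Fin (K + 2) → ℝ) × (Fin (r + 1) → ℝ) × (Fin (r + 1) → ℝ)

section
variable (K r : ℕ)

/-- Replace the coordinate `z₂` by `t`. -/
def updZ2 (p : Pt7 K r) (t : ℝ) : Pt7 K r := (p.1, t, p.2.2)

/-- Replace the coordinate `w₀₀` by `t`. -/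
def updW00 (p : Pt7 K r) (t : ℝ) : Pt7 K r := (p.1, p.2.1, t, p.2.2.2)

/-- Replace the coordinate `w₁₀` by `t`. -/
def updW10 (p : Pt7 K r) (t : ℝ) : Pt7 K r := (p.1, p.2.1, p.2.2.1, t, p.2.2.2.2)

/-- Replace the coordinate `w₀₁` by `t`. -/
def updW01 (p : Pt7 K r) (t : ℝ) : Pt7 K r :=
  (p.1, p.2.1, p.2.2.1, p.2.2.2.1, t, p.2.2.2.2.2)

/-- Replace the coordinate `W_j` by `t`. -/
def updW (p : Pt7 K r) (j : Fin (K + 2)) (t : ℝ) : Pt7 K r :=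
  (p.1, p.2.1, p.2.2.1, p.2.2.2.1, p.2.2.2.2.1,
    Function.update p.2.2.2.2.2.1 j t, p.2.2.2.2.2.2)

/-- Partial derivative with respect to `z₂`. -/
noncomputable def pdz2 (f : Pt7 K r → ℝ) (p : Pt7 K r) : ℝ :=
  deriv (fun t => f (updZ2 K r p t)) p.2.1

/-- Partial derivative with respect to `w₀₀`. -/
noncomputable def pdw00 (f : Pt7 K r → ℝ) (p : Pt7 K r) : ℝ :=
  deriv (fun t => f (updW00 K r p t)) p.2.2.1

/-- Partial derivative with respect to `w₁₀`. -/
noncomputable def pdw10 (f : Pt7 K r → ℝ) (p : Pt7 K r) : ℝ :=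
  deriv (fun t => f (updW10 K r p t)) p.2.2.2.1

/-- Partial derivative with respect to `w₀₁`. -/
noncomputable def pdw01 (f : Pt7 K r → ℝ) (p : Pt7 K r) : ℝ :=
  deriv (fun t => f (updW01 K r p t)) p.2.2.2.2.1

/-- Partial derivative with respect to `W_j`. -/
noncomputable def pdW (j : Fin (K + 2)) (f : Pt7 K r → ℝ) (p : Pt7 K r) : ℝ :=
  deriv (fun t => f (updW K r p j t)) (p.2.2.2.2.2.1 j)

/-- Extend a finite tuple `W₀, …, W_{K+1}` by zero to a sequence indexed by `ℕ`. -/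
def extW (W : Fin (K + 2) → ℝ) : ℕ → ℝ :=
  fun j => if h : j < K + 2 then W ⟨j, h⟩ else 0

end

/-- The rational functions `E_k`: `E₀ = W₁/W₀`,
`E_{k+1} = Σ_{j=0}^{k+1} W_{j+1}·∂E_k/∂W_j`. -/
noncomputable def Efun : ℕ → (ℕ → ℝ) → ℝ
  | 0 => fun W => W 1 / W 0
  | k + 1 => fun W => ∑ j ∈ Finset.range (k + 2),
      W (j + 1) * deriv (fun t => Efun k (Function.update W j t)) (W j)

/-- The restricted total derivative operator `D̂₂` in the chosen coordinates:
`D̂₂f = f_{z₂} + w₀₁ f_{w₀₀} + (ζ¹₀ − ½W₀²) f_{w₁₀} + W₀ f_{w₀₁} − Σ_{k=0}^{K} E_k f_{W_k}`. -/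
noncomputable def D2hat (K r : ℕ) (f : Pt7 K r → ℝ) (p : Pt7 K r) : ℝ :=
  pdz2 K r f p + p.2.2.2.2.1 * pdw00 K r f p
    + (p.2.2.2.2.2.2.1 0 - (1 / 2) * (p.2.2.2.2.2.1 0) ^ 2) * pdw10 K r f p
    + p.2.2.2.2.2.1 0 * pdw01 K r f p
    - ∑ k : Fin (K + 1), Efun k.1 (extW K p.2.2.2.2.2.1) * pdW K r k.castSucc f p

/-!
Write `D̂₂ f = Df · V` for the vector field `V` with `(z₂, w₀₀, w₁₀, w₀₁, W₀, …, W_K)`-components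
`(1, w₀₁, ζ¹₀ - ½W₀², W₀, -E₀, …, -E_K)` and all others zero. If `Df · V` and `Df · u` vanish on `Ω`
for a constant direction `u`, then so does `Df · ∂ᵤV` (the bracket `[u, V]` annihilates `f`). Now
`E_k = P_k / W₀^{k+1}` with a polynomial `P_k` in which `W_{k+1}` occurs only linearly, with
coefficient `W₀^k`, and no `W_j` with `j > k + 1` occurs; so differentiating along `W_{m+1}` once
`f_{W_j} = 0` for `j > m` is known gives `f_{W_m} / W₀ = 0`, and downward induction from the given
`f_{W_{K+1}} = 0` kills every `f_{W_j}`. What remains is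
`f_{z₂} + w₀₁ f_{w₀₀} + (ζ¹₀ - ½W₀²) f_{w₁₀} + W₀ f_{w₀₁} = 0`; differentiating twice in `W₀` gives
`f_{w₁₀} = f_{w₀₁} = 0`, and then once in `w₀₁` gives `f_{w₀₀} = f_{z₂} = 0`.
-/

open Filter MvPolynomial Topology
open Function (update update_eq_self update_of_ne)

section LieBracket

variable {E : Type*} [NormedAddCommGroup E] [NormedSpace ℝ E] {Ω : Set E} {f : E → ℝ}

theorem fderiv_apply_deriv_field_eq_zero (hΩ : IsOpen Ω) (hf : ContDiffOn ℝ 2 f Ω)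
    {V : E → E} {u V' : E} (hV : ∀ q ∈ Ω, fderiv ℝ f q (V q) = 0)
    (hu : ∀ q ∈ Ω, fderiv ℝ f q u = 0) {γ : ℝ → E} {a : ℝ} (hγ : HasDerivAt γ u a)
    (ha : γ a ∈ Ω) (hVγ : HasDerivAt (fun t => V (γ t)) V' a) :
    fderiv ℝ f (γ a) V' = 0 := by
  have hnhds : Ω ∈ 𝓝 (γ a) := hΩ.mem_nhds ha
  have hf2 : ContDiffAt ℝ 2 f (γ a) := hf.contDiffAt hnhds
  have hf' : HasFDerivAt (fderiv ℝ f) (fderiv ℝ (fderiv ℝ f) (γ a)) (γ a) :=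
    ((hf2.fderiv_right (m := 1) le_rfl).differentiableAt one_ne_zero).hasFDerivAt
  -- By symmetry of `D²f`, `D²f u v` is the derivative of `q ↦ Df(q) u ≡ 0` along `v`.
  have hsecond (v : E) : fderiv ℝ (fderiv ℝ f) (γ a) u v = 0 := by
    have h0 : HasFDerivAt (fun q => fderiv ℝ f q u) (0 : E →L[ℝ] ℝ) (γ a) :=
      (hasFDerivAt_const 0 _).congr_of_eventuallyEq
        (by filter_upwards [hnhds] with q hq using hu q hq)
    have h1 := congrArg (· v) ((hf'.clm_apply (hasFDerivAt_const u _)).unique h0)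
    rw [hf2.isSymmSndFDerivAt (by simp) u v]
    simpa using h1
  have hzero : (fun t => fderiv ℝ f (γ t) (V (γ t))) =ᶠ[𝓝 a] fun _ => 0 := by
    filter_upwards [hγ.continuousAt.preimage_mem_nhds hnhds] with t ht using hV _ ht
  have hderiv := (hf'.comp_hasDerivAt a hγ).clm_apply hVγ
  simpa [hsecond] using hderiv.unique ((hasDerivAt_const a 0).congr_of_eventuallyEq hzero)

end LieBracket

section Polynomials

variable {σ R : Type*} [CommSemiring R]

theorem MvPolynomial.pderiv_pderiv_comm (p : MvPolynomial σ R) (i j : σ) :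
    pderiv i (pderiv j p) = pderiv j (pderiv i p) := by
  classical
  induction p using MvPolynomial.induction_on with
  | C a => simp
  | add p q hp hq => simp [hp, hq]
  | mul_X p n hp =>
    simp only [pderiv_mul, pderiv_X, map_add, hp]
    have hsingle (a b : σ) : pderiv a ((Pi.single b 1 : σ → MvPolynomial σ R) n) = 0 := by
      rcases eq_or_ne b n with rfl | h <;> simp [*]
    rw [hsingle, hsingle]
    ring

theorem MvPolynomial.hasDerivAt_eval_update [DecidableEq σ] (Q : MvPolynomial σ ℝ)
    (W : σ → ℝ) (j : σ) (t : ℝ) :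
    HasDerivAt (fun s => eval (update W j s) Q) (eval (update W j t) (pderiv j Q)) t := by
  induction Q using MvPolynomial.induction_on with
  | C a => simpa using hasDerivAt_const t a
  | add p q hp hq => simpa using hp.fun_add hq
  | mul_X p n hp =>
    have hn : HasDerivAt (fun s => update W j s n) ((Pi.single j 1 : σ → ℝ) n) t := by
      rcases eq_or_ne n j with rfl | h
      · simpa using hasDerivAt_id' t
      · simpa [update_of_ne h, Pi.single_apply, h] using hasDerivAt_const t (W n)
    rcases eq_or_ne n j with rfl | h
    · simpa [pderiv_X, add_comm, mul_comm] using hp.fun_mul hn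
    · simpa [pderiv_X, Pi.single_apply, h, update_of_ne h, mul_comm] using hp.fun_mul hn

theorem MvPolynomial.hasDerivAt_update_of_eq_eval_div [DecidableEq σ]
    {F : (σ → ℝ) → ℝ} {P Q : MvPolynomial σ ℝ}
    (hF : ∀ W, eval W Q ≠ 0 → F W = eval W P / eval W Q) {W : σ → ℝ} (hW : eval W Q ≠ 0)
    (j : σ) :
    HasDerivAt (fun t => F (update W j t))
      ((eval W (pderiv j P) * eval W Q - eval W P * eval W (pderiv j Q)) / eval W Q ^ 2)
      (W j) := by
  have hP := hasDerivAt_eval_update P W j (W j)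
  have hQ := hasDerivAt_eval_update Q W j (W j)
  have hQW : eval (update W j (W j)) Q ≠ 0 := by rwa [update_eq_self]
  have h := hP.div hQ hQW
  rw [update_eq_self] at h
  refine h.congr_of_eventuallyEq ?_
  filter_upwards [hQ.continuousAt.eventually_ne hQW] with t ht
  exact hF _ ht

end Polynomials

/-- `E_k = Epoly k / W₀ ^ (k + 1)`: the recursion is the quotient rule for the derivation
`Σ_j W_{j+1} ∂_j` applied to this fraction. -/
noncomputable def Epoly : ℕ → MvPolynomial ℕ ℝ
  | 0 => X 1
  | k + 1 => X 0 * ∑ j ∈ Finset.range (k + 2), X (j + 1) * pderiv j (Epoly k)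
      - ((k + 1 : ℕ) : MvPolynomial ℕ ℝ) * X 1 * Epoly k

theorem eval_pderiv_X_zero_pow (W : ℕ → ℝ) (j n : ℕ) :
    eval W (pderiv j (X 0 ^ (n + 1))) = if j = 0 then (n + 1) * W 0 ^ n else 0 := by
  rcases eq_or_ne j 0 with rfl | hj
  · simp
  · simp [pderiv_X_of_ne (Ne.symm hj), hj]

theorem Efun_eq_eval_div (k : ℕ) {W : ℕ → ℝ} (hW : W 0 ≠ 0) :
    Efun k W = eval W (Epoly k) / W 0 ^ (k + 1) := by
  induction k generalizing W with
  | zero => simp [Efun, Epoly]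
  | succ k ih =>
    have hB : eval W (X 0 ^ (k + 1)) ≠ 0 := by simpa using pow_ne_zero (k + 1) hW
    have hderiv (j : ℕ) := (hasDerivAt_update_of_eq_eval_div (F := Efun k)
      (fun V hV => by simpa using ih (W := V) (by simpa using hV)) hB j).deriv
    simp only [Efun, hderiv, eval_pderiv_X_zero_pow]
    simp only [Epoly, map_sub, map_mul, map_sum, eval_X, map_natCast]
    simp only [mul_div_assoc', ← Finset.sum_div, mul_sub, Finset.sum_sub_distrib, ← mul_assoc,
      ← Finset.sum_mul, mul_ite, mul_zero, Finset.sum_ite_eq', Finset.mem_range,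
      show 0 < k + 2 by omega, if_true, zero_add, map_pow, eval_X]
    field_simp
    push_cast
    ring

theorem pderiv_Epoly_of_lt {k j : ℕ} (h : k + 1 < j) : pderiv j (Epoly k) = 0 := by
  induction k generalizing j with
  | zero => simp [Epoly, pderiv_X_of_ne (show 1 ≠ j by omega)]
  | succ k ih =>
    have hsum : ∀ i ∈ Finset.range (k + 2), pderiv j (X (i + 1) * pderiv i (Epoly k)) = 0 := by
      intro i hi
      rw [Finset.mem_range] at hi
      simp [pderiv_X_of_ne (show i + 1 ≠ j by omega), pderiv_pderiv_comm _ j,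
        ih (show k + 1 < j by omega)]
    rw [Epoly, map_sub, pderiv_mul, map_sum, Finset.sum_eq_zero hsum]
    simp [pderiv_X_of_ne (show 0 ≠ j by omega), pderiv_X_of_ne (show 1 ≠ j by omega),
      ih (show k + 1 < j by omega)]

theorem pderiv_succ_Epoly (k : ℕ) : pderiv (k + 1) (Epoly k) = X 0 ^ k := by
  induction k with
  | zero => simp [Epoly]
  | succ k ih =>
    have hsum : ∀ i ∈ Finset.range (k + 2), pderiv (k + 2) (X (i + 1) * pderiv i (Epoly k))
        = if k + 1 = i then X 0 ^ k else 0 := by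
      intro i hi
      rw [Finset.mem_range] at hi
      rcases eq_or_ne (k + 1) i with rfl | hi'
      · simp [ih]
      · simp [pderiv_X_of_ne (show i + 1 ≠ k + 2 by omega), pderiv_pderiv_comm _ (k + 2),
          pderiv_Epoly_of_lt (show k + 1 < k + 2 by omega), hi']
    rw [Epoly, map_sub, pderiv_mul, map_sum, Finset.sum_congr rfl hsum, Finset.sum_ite_eq]
    simp [pderiv_X_of_ne (show 0 ≠ k + 2 by omega), pderiv_X_of_ne (show 1 ≠ k + 2 by omega),
      pderiv_Epoly_of_lt (show k + 1 < k + 2 by omega), pow_succ']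

theorem hasDerivAt_Efun_update (k : ℕ) {j : ℕ} (hj : j ≠ 0) {W : ℕ → ℝ} (hW : W 0 ≠ 0) :
    HasDerivAt (fun t => Efun k (update W j t))
      (eval W (pderiv j (Epoly k)) / W 0 ^ (k + 1)) (W j) := by
  have hB : eval W (X 0 ^ (k + 1)) ≠ 0 := by simpa using pow_ne_zero (k + 1) hW
  refine (hasDerivAt_update_of_eq_eval_div (P := Epoly k) (fun V hV => ?_) hB j).congr_deriv ?_
  · simpa using Efun_eq_eval_div k (W := V) (by simpa using hV)
  · rw [eval_pderiv_X_zero_pow, if_neg hj]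
    simp only [map_pow, eval_X, mul_zero, sub_zero]
    field_simp

section Coordinates

variable {K r : ℕ}

def dirZ2 (K r : ℕ) : Pt7 K r := (0, 1, 0, 0, 0, 0, 0, 0)

def dirW00 (K r : ℕ) : Pt7 K r := (0, 0, 1, 0, 0, 0, 0, 0)

def dirW10 (K r : ℕ) : Pt7 K r := (0, 0, 0, 1, 0, 0, 0, 0)

def dirW01 (K r : ℕ) : Pt7 K r := (0, 0, 0, 0, 1, 0, 0, 0)

def dirW (K r : ℕ) (j : Fin (K + 2)) : Pt7 K r := (0, 0, 0, 0, 0, Pi.single j 1, 0, 0)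

theorem hasDerivAt_updZ2 (p : Pt7 K r) (t : ℝ) : HasDerivAt (updZ2 K r p) (dirZ2 K r) t :=
  (hasDerivAt_const t _).prodMk ((hasDerivAt_id t).prodMk (hasDerivAt_const t _))

theorem hasDerivAt_updW00 (p : Pt7 K r) (t : ℝ) : HasDerivAt (updW00 K r p) (dirW00 K r) t :=
  (hasDerivAt_const t _).prodMk ((hasDerivAt_const t _).prodMk
    ((hasDerivAt_id t).prodMk (hasDerivAt_const t _)))

theorem hasDerivAt_updW10 (p : Pt7 K r) (t : ℝ) : HasDerivAt (updW10 K r p) (dirW10 K r) t :=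
  (hasDerivAt_const t _).prodMk ((hasDerivAt_const t _).prodMk ((hasDerivAt_const t _).prodMk
    ((hasDerivAt_id t).prodMk (hasDerivAt_const t _))))

theorem hasDerivAt_updW01 (p : Pt7 K r) (t : ℝ) : HasDerivAt (updW01 K r p) (dirW01 K r) t :=
  (hasDerivAt_const t _).prodMk ((hasDerivAt_const t _).prodMk ((hasDerivAt_const t _).prodMk
    ((hasDerivAt_const t _).prodMk ((hasDerivAt_id t).prodMk (hasDerivAt_const t _)))))

theorem hasDerivAt_updW (p : Pt7 K r) (j : Fin (K + 2)) (t : ℝ) :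
    HasDerivAt (updW K r p j) (dirW K r j) t :=
  (hasDerivAt_const t _).prodMk ((hasDerivAt_const t _).prodMk ((hasDerivAt_const t _).prodMk
    ((hasDerivAt_const t _).prodMk ((hasDerivAt_const t _).prodMk
      ((hasDerivAt_update _ j t).prodMk (hasDerivAt_const t _))))))

@[simp]
theorem updW_self (p : Pt7 K r) (j : Fin (K + 2)) : updW K r p j (p.2.2.2.2.2.1 j) = p := by
  simp [updW]

variable {f : Pt7 K r → ℝ} {p : Pt7 K r}

theorem pdz2_eq_fderiv (hf : DifferentiableAt ℝ f p) : pdz2 K r f p = fderiv ℝ f p (dirZ2 K r) :=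
  (hf.hasFDerivAt.comp_hasDerivAt _ (hasDerivAt_updZ2 p _)).deriv

theorem pdw00_eq_fderiv (hf : DifferentiableAt ℝ f p) :
    pdw00 K r f p = fderiv ℝ f p (dirW00 K r) :=
  (hf.hasFDerivAt.comp_hasDerivAt _ (hasDerivAt_updW00 p _)).deriv

theorem pdw10_eq_fderiv (hf : DifferentiableAt ℝ f p) :
    pdw10 K r f p = fderiv ℝ f p (dirW10 K r) :=
  (hf.hasFDerivAt.comp_hasDerivAt _ (hasDerivAt_updW10 p _)).deriv

theorem pdw01_eq_fderiv (hf : DifferentiableAt ℝ f p) :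
    pdw01 K r f p = fderiv ℝ f p (dirW01 K r) :=
  (hf.hasFDerivAt.comp_hasDerivAt _ (hasDerivAt_updW01 p _)).deriv

theorem pdW_eq_fderiv (j : Fin (K + 2)) (hf : DifferentiableAt ℝ f p) :
    pdW K r j f p = fderiv ℝ f p (dirW K r j) := by
  have hf' : DifferentiableAt ℝ f (updW K r p j (p.2.2.2.2.2.1 j)) := by rwa [updW_self]
  exact (hf'.hasFDerivAt.comp_hasDerivAt _ (hasDerivAt_updW p j _)).deriv.trans (by rw [updW_self])

end Coordinates

section Fields

variable {K r : ℕ}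

theorem extW_apply (W : Fin (K + 2) → ℝ) (j : Fin (K + 2)) : extW K W j = W j := by
  simp [extW]

theorem extW_zero (W : Fin (K + 2) → ℝ) : extW K W 0 = W 0 := extW_apply W 0

theorem extW_update (W : Fin (K + 2) → ℝ) (j : Fin (K + 2)) (t : ℝ) :
    extW K (update W j t) = update (extW K W) j t := by
  funext n
  by_cases hn : n < K + 2
  · rcases eq_or_ne n j with rfl | h
    · simp [extW]
    · simp [extW, hn, update_of_ne h, update_of_ne (show (⟨n, hn⟩ : Fin (K + 2)) ≠ j from
        fun e => h (congrArg Fin.val e))]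
  · simp [extW, hn, update_of_ne (show n ≠ j by omega)]

noncomputable def d2BaseField (K r : ℕ) (q : Pt7 K r) : Pt7 K r :=
  dirZ2 K r + q.2.2.2.2.1 • dirW00 K r
    + (q.2.2.2.2.2.2.1 0 - (1 / 2) * (q.2.2.2.2.2.1 0) ^ 2) • dirW10 K r
    + q.2.2.2.2.2.1 0 • dirW01 K r

noncomputable def d2Field (K r : ℕ) (q : Pt7 K r) : Pt7 K r :=
  d2BaseField K r q - ∑ k : Fin (K + 1), Efun k (extW K q.2.2.2.2.2.1) • dirW K r k.castSucc

theorem D2hat_eq_fderiv {f : Pt7 K r → ℝ} {q : Pt7 K r} (hf : DifferentiableAt ℝ f q) :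
    D2hat K r f q = fderiv ℝ f q (d2Field K r q) := by
  simp [D2hat, d2Field, d2BaseField, pdz2_eq_fderiv hf, pdw00_eq_fderiv hf, pdw10_eq_fderiv hf,
    pdw01_eq_fderiv hf, pdW_eq_fderiv _ hf]

theorem hasDerivAt_d2Field_updW (q : Pt7 K r) {j : Fin (K + 2)} (hj : j ≠ 0)
    (hq : q.2.2.2.2.2.1 0 ≠ 0) :
    HasDerivAt (fun s => d2Field K r (updW K r q j s))
      (-∑ k : Fin (K + 1), (eval (extW K q.2.2.2.2.2.1) (pderiv (j : ℕ) (Epoly k))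
        / q.2.2.2.2.2.1 0 ^ (k.1 + 1)) • dirW K r k.castSucc) (q.2.2.2.2.2.1 j) := by
  have hbase (s : ℝ) : d2BaseField K r (updW K r q j s) = d2BaseField K r q := by
    simp [d2BaseField, updW, update_of_ne hj.symm]
  have hE (k : Fin (K + 1)) := hasDerivAt_Efun_update k (j := j) (Fin.val_ne_of_ne hj)
    (W := extW K q.2.2.2.2.2.1) (by rwa [extW_zero])
  rw [extW_apply, extW_zero] at hE
  have hupd (s : ℝ) : (updW K r q j s).2.2.2.2.2.1 = update q.2.2.2.2.2.1 j s := rfl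
  simp only [d2Field, hbase, hupd, extW_update]
  exact (HasDerivAt.fun_sum fun k _ => (hE k).smul_const (dirW K r k.castSucc)).const_sub _

theorem hasDerivAt_d2BaseField_updW_zero (q : Pt7 K r) :
    HasDerivAt (fun s => d2BaseField K r (updW K r q 0 s))
      (-q.2.2.2.2.2.1 0 • dirW10 K r + dirW01 K r) (q.2.2.2.2.2.1 0) := by
  have hc : HasDerivAt (fun s : ℝ => q.2.2.2.2.2.2.1 0 - (1 / 2) * s ^ 2) (-q.2.2.2.2.2.1 0)
      (q.2.2.2.2.2.1 0) := by
    refine (((hasDerivAt_pow 2 _).const_mul (1 / 2 : ℝ)).const_sub _).congr_deriv ?_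
    ring
  have h := (hc.smul_const (dirW10 K r)).add
    ((hasDerivAt_id (q.2.2.2.2.2.1 0)).smul_const (dirW01 K r))
  simpa [d2BaseField, updW, add_assoc] using h.const_add (dirZ2 K r + q.2.2.2.2.1 • dirW00 K r)

end Fields

section Integrals

variable {K r : ℕ} {Ω : Set (Pt7 K r)} {f : Pt7 K r → ℝ}

theorem fderiv_dirW_castSucc_eq_zero (hΩ : IsOpen Ω) (hΩ0 : ∀ q ∈ Ω, q.2.2.2.2.2.1 0 ≠ 0)
    (hf : ContDiffOn ℝ 2 f Ω) (hD : ∀ q ∈ Ω, fderiv ℝ f q (d2Field K r q) = 0) (m : Fin (K + 1))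
    (hgt : ∀ i, m.castSucc < i → ∀ q ∈ Ω, fderiv ℝ f q (dirW K r i) = 0) :
    ∀ q ∈ Ω, fderiv ℝ f q (dirW K r m.castSucc) = 0 := by
  intro q hq
  have hW0 := hΩ0 q hq
  have hbracket := fderiv_apply_deriv_field_eq_zero hΩ hf hD
    (hgt m.succ Fin.castSucc_lt_succ) (hasDerivAt_updW q m.succ _) (by rwa [updW_self])
    (hasDerivAt_d2Field_updW q (Fin.succ_ne_zero m) hW0)
  rw [updW_self, map_neg, map_sum, neg_eq_zero, Finset.sum_eq_single m] at hbracket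
  · simpa [pderiv_succ_Epoly, extW_zero, hW0, pow_succ] using hbracket
  · intro k _ hk
    rcases lt_or_gt_of_ne hk with hlt | hlt
    · simp [pderiv_Epoly_of_lt (show k.1 + 1 < m.1 + 1 by omega)]
    · simp [hgt k.castSucc (by simpa using hlt) q hq]
  · simp

theorem fderiv_dirW_eq_zero (hΩ : IsOpen Ω) (hΩ0 : ∀ q ∈ Ω, q.2.2.2.2.2.1 0 ≠ 0)
    (hf : ContDiffOn ℝ 2 f Ω) (hD : ∀ q ∈ Ω, fderiv ℝ f q (d2Field K r q) = 0)
    (hlast : ∀ q ∈ Ω, fderiv ℝ f q (dirW K r (Fin.last (K + 1))) = 0) (j : Fin (K + 2)) :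
    ∀ q ∈ Ω, fderiv ℝ f q (dirW K r j) = 0 := by
  suffices h : ∀ i, j ≤ i → ∀ q ∈ Ω, fderiv ℝ f q (dirW K r i) = 0 from h j le_rfl
  induction j using Fin.reverseInduction with
  | last => intro i hi; rwa [Fin.last_le_iff.mp hi]
  | cast m ih =>
    intro i hi
    rcases hi.eq_or_lt with rfl | hlt
    · exact fderiv_dirW_castSucc_eq_zero hΩ hΩ0 hf hD m fun i hi =>
        ih i (Fin.castSucc_lt_iff_succ_le.mp hi)
    · exact ih i (Fin.castSucc_lt_iff_succ_le.mp hlt)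

theorem fderiv_dirW10_dirW01_eq_zero (hΩ : IsOpen Ω) (hf : ContDiffOn ℝ 2 f Ω)
    (hbase : ∀ q ∈ Ω, fderiv ℝ f q (d2BaseField K r q) = 0)
    (hW0 : ∀ q ∈ Ω, fderiv ℝ f q (dirW K r 0) = 0) :
    ∀ q ∈ Ω, fderiv ℝ f q (dirW10 K r) = 0 ∧ fderiv ℝ f q (dirW01 K r) = 0 := by
  have hrel (q : Pt7 K r) (hq : q ∈ Ω) :
      fderiv ℝ f q (-q.2.2.2.2.2.1 0 • dirW10 K r + dirW01 K r) = 0 := by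
    simpa using fderiv_apply_deriv_field_eq_zero hΩ hf hbase hW0 (hasDerivAt_updW q 0 _)
      (by simpa using hq) (hasDerivAt_d2BaseField_updW_zero q)
  intro q hq
  have hV : HasDerivAt (fun s => -(updW K r q 0 s).2.2.2.2.2.1 0 • dirW10 K r + dirW01 K r)
      (-dirW10 K r) (q.2.2.2.2.2.1 0) := by
    simpa [updW] using ((hasDerivAt_id (q.2.2.2.2.2.1 0)).neg.smul_const (dirW10 K r)).add_const
      (dirW01 K r)
  have h10 : fderiv ℝ f q (dirW10 K r) = 0 := by
    simpa using fderiv_apply_deriv_field_eq_zero hΩ hf hrel hW0 (hasDerivAt_updW q 0 _)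
      (by simpa using hq) hV
  exact ⟨h10, by simpa [h10] using hrel q hq⟩

theorem fderiv_dirZ2_dirW00_eq_zero (hΩ : IsOpen Ω) (hf : ContDiffOn ℝ 2 f Ω)
    (hrel : ∀ q ∈ Ω, fderiv ℝ f q (dirZ2 K r + q.2.2.2.2.1 • dirW00 K r) = 0)
    (hW01 : ∀ q ∈ Ω, fderiv ℝ f q (dirW01 K r) = 0) :
    ∀ q ∈ Ω, fderiv ℝ f q (dirZ2 K r) = 0 ∧ fderiv ℝ f q (dirW00 K r) = 0 := by
  intro q hq
  have hV : HasDerivAt (fun s => dirZ2 K r + (updW01 K r q s).2.2.2.2.1 • dirW00 K r)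
      (dirW00 K r) (q.2.2.2.2.1) := by
    simpa [updW01] using ((hasDerivAt_id (q.2.2.2.2.1)).smul_const (dirW00 K r)).const_add
      (dirZ2 K r)
  have h00 : fderiv ℝ f q (dirW00 K r) = 0 :=
    fderiv_apply_deriv_field_eq_zero hΩ hf hrel hW01 (hasDerivAt_updW01 q _) hq hV
  exact ⟨by simpa [h00] using hrel q hq, h00⟩

end Integrals

/-- (Classification of `z₂`-integrals of the reduced equation, coordinate
form.)  A smooth function `f` on `Ω ⊆ {W₀ ≠ 0}` that does not depend on `W_{K+1}` satisfies
`D̂₂f = 0` on `Ω` if and only if all the partial derivatives of `f` with respect to `z₂`,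
`w₀₀`, `w₁₀`, `w₀₁` and `W₀, …, W_K` vanish identically on `Ω`, i.e. iff `f` depends only
on `z₁` and `ζ¹₀, …, ζ¹_r, ζ²₀, …, ζ²_r`. -/
theorem statement7 (K r : ℕ) (Ω : Set (Pt7 K r)) (hΩ : IsOpen Ω)
    (hΩ0 : ∀ p ∈ Ω, p.2.2.2.2.2.1 0 ≠ 0)
    (f : Pt7 K r → ℝ) (hf : ContDiffOn ℝ (⊤ : ℕ∞) f Ω)
    (hind : ∀ (p : Pt7 K r) (t : ℝ), f (updW K r p (Fin.last (K + 1)) t) = f p) :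
    (∀ p ∈ Ω, D2hat K r f p = 0) ↔
      ∀ p ∈ Ω, pdz2 K r f p = 0 ∧ pdw00 K r f p = 0 ∧ pdw10 K r f p = 0 ∧
        pdw01 K r f p = 0 ∧ ∀ k : Fin (K + 1), pdW K r k.castSucc f p = 0 := by
  have hf2 : ContDiffOn ℝ 2 f Ω := hf.of_le (WithTop.coe_le_coe.mpr le_top)
  have hdiff (q : Pt7 K r) (hq : q ∈ Ω) : DifferentiableAt ℝ f q :=
    (hf2.contDiffAt (hΩ.mem_nhds hq)).differentiableAt two_ne_zero
  constructor
  · intro hD2 p hp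
    have hD (q : Pt7 K r) (hq : q ∈ Ω) : fderiv ℝ f q (d2Field K r q) = 0 := by
      rw [← D2hat_eq_fderiv (hdiff q hq), hD2 q hq]
    have hlast (q : Pt7 K r) (hq : q ∈ Ω) : fderiv ℝ f q (dirW K r (Fin.last (K + 1))) = 0 := by
      rw [← pdW_eq_fderiv _ (hdiff q hq), pdW, funext (hind q), deriv_const]
    have hW := fderiv_dirW_eq_zero hΩ hΩ0 hf2 hD hlast
    have hbase (q : Pt7 K r) (hq : q ∈ Ω) : fderiv ℝ f q (d2BaseField K r q) = 0 := by
      simpa [d2Field, hW _ q hq] using hD q hq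
    have hw := fderiv_dirW10_dirW01_eq_zero hΩ hf2 hbase (hW 0)
    have hz := fderiv_dirZ2_dirW00_eq_zero hΩ hf2
      (fun q hq => by simpa [d2BaseField, hw q hq] using hbase q hq) (fun q hq => (hw q hq).2)
    rw [pdz2_eq_fderiv (hdiff p hp), pdw00_eq_fderiv (hdiff p hp), pdw10_eq_fderiv (hdiff p hp),
      pdw01_eq_fderiv (hdiff p hp)]
    exact ⟨(hz p hp).1, (hz p hp).2, (hw p hp).1, (hw p hp).2,
      fun k => (pdW_eq_fderiv _ (hdiff p hp)).trans (hW _ p hp)⟩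
  · intro h p hp
    obtain ⟨hz2, hw00, hw10, hw01, hW⟩ := h p hp
    simp [D2hat, hz2, hw00, hw10, hw01, hW]
end
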